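/- arXiv:1901.02169 — 5 statements merged into one kernel-verified Lean document; each statement's English description precedes it below -/
import Mathlib

section
/- Under the same setting, the function G(λ) = λ − ∫ l (f − λ)_− + ∫ u (f − λ)_+ has one-sided derivatives, and the quantity 1 − ∫ l(ξ) 1{f(ξ) < λ} dξ − ∫ u(ξ) 1{f(ξ) ≥ λ} dξ is a subgradient of G at λ (i.e., G(λ') ≥ G(λ) + (1 − ∫ l·1{f<λ} − ∫ u·1{f≥λ})(λ' − λ) for all λ'). -/
/-! For each `ξ`, `λ ↦ u ξ * (f ξ - λ)₊ - l ξ * (λ - f ξ)₊` is convex and piecewise linear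
with slope `-u ξ` left of `f ξ` and `-l ξ` right of it (convex because `l ≤ u`), so
`-(if f ξ < λ then l ξ else u ξ)` is a subgradient at `λ`. The bound `|f| u ∈ L¹` makes
every integrand integrable, and integrating the pointwise inequality gives the result. -/

open MeasureTheory

theorem weighted_hinge_subgradient {a b : ℝ} (hab : a ≤ b) (x t t' : ℝ) :
    b * max (x - t) 0 - a * max (t - x) 0 - (if x < t then a else b) * (t' - t)
      ≤ b * max (x - t') 0 - a * max (t' - x) 0 := by
  rcases lt_or_ge x t with h | h
  · rw [if_pos h, max_eq_right (sub_nonpos.2 h.le), max_eq_left (sub_nonneg.2 h.le)]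
    rcases le_total x t' with h' | h' <;>
      simp only [max_eq_left, max_eq_right, sub_nonneg, sub_nonpos, h'] <;> nlinarith
  · rw [if_neg h.not_gt, max_eq_left (sub_nonneg.2 h), max_eq_right (sub_nonpos.2 h)]
    rcases le_total x t' with h' | h' <;>
      simp only [max_eq_left, max_eq_right, sub_nonneg, sub_nonpos, h'] <;> nlinarith

theorem abs_max_sub_zero_le (x t : ℝ) : |max (x - t) 0| ≤ |x| + |t| := by
  rw [abs_of_nonneg (le_max_right _ _)]
  exact max_le ((le_abs_self _).trans (abs_sub x t)) (by positivity)

section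

variable {α : Type*} [MeasurableSpace α] {μ : Measure α} {f u w : α → ℝ}

theorem integrable_mul_of_abs_le_add_abs {g : α → ℝ} (t : ℝ)
    (hu : Integrable u μ) (hfu : Integrable (fun ξ => |f ξ| * u ξ) μ)
    (hw : AEStronglyMeasurable w μ) (hg : AEStronglyMeasurable g μ)
    (hwu : ∀ ξ, |w ξ| ≤ u ξ) (hgf : ∀ ξ, |g ξ| ≤ |f ξ| + |t|) :
    Integrable (fun ξ => w ξ * g ξ) μ := by
  refine (hfu.add (hu.const_mul |t|)).mono' (hw.mul hg) (ae_of_all _ fun ξ => ?_)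
  calc ‖w ξ * g ξ‖ = |w ξ| * |g ξ| := abs_mul _ _
    _ ≤ u ξ * (|f ξ| + |t|) :=
      mul_le_mul (hwu ξ) (hgf ξ) (abs_nonneg _) ((abs_nonneg _).trans (hwu ξ))
    _ = |f ξ| * u ξ + |t| * u ξ := by ring

theorem integrable_mul_max_sub_const (t : ℝ) (hf : Measurable f)
    (hu : Integrable u μ) (hfu : Integrable (fun ξ => |f ξ| * u ξ) μ)
    (hw : AEStronglyMeasurable w μ) (hwu : ∀ ξ, |w ξ| ≤ u ξ) :
    Integrable (fun ξ => w ξ * max (f ξ - t) 0) μ :=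
  integrable_mul_of_abs_le_add_abs t hu hfu hw
    ((hf.sub_const t).max measurable_const).aestronglyMeasurable hwu
    fun _ => abs_max_sub_zero_le _ _

theorem integrable_mul_max_const_sub (t : ℝ) (hf : Measurable f)
    (hu : Integrable u μ) (hfu : Integrable (fun ξ => |f ξ| * u ξ) μ)
    (hw : AEStronglyMeasurable w μ) (hwu : ∀ ξ, |w ξ| ≤ u ξ) :
    Integrable (fun ξ => w ξ * max (t - f ξ) 0) μ :=
  integrable_mul_of_abs_le_add_abs t hu hfu hw
    ((hf.const_sub t).max measurable_const).aestronglyMeasurable hwu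
    fun ξ => by
      have h := abs_max_sub_zero_le (-f ξ) (-t)
      rwa [neg_sub_neg, abs_neg, abs_neg] at h

variable {l : α → ℝ}

theorem integral_ite_lt_const (t : ℝ) (hf : Measurable f) (hl : Integrable l μ)
    (hu : Integrable u μ) :
    ∫ ξ, (if f ξ < t then l ξ else u ξ) ∂μ
      = (∫ ξ in {ξ | f ξ < t}, l ξ ∂μ) + ∫ ξ in {ξ | t ≤ f ξ}, u ξ ∂μ := by
  have hcompl : {ξ | t ≤ f ξ} = {ξ | f ξ < t}ᶜ := by ext; simp
  rw [hcompl, ← integral_piecewise (measurableSet_lt hf measurable_const)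
    hl.integrableOn hu.integrableOn]
  rfl

theorem integral_weighted_hinge_subgradient (t t' : ℝ) (hf : Measurable f)
    (hl : Measurable l) (hu : Measurable u) (hl0 : ∀ ξ, 0 ≤ l ξ) (hlu : ∀ ξ, l ξ ≤ u ξ)
    (hfu : Integrable (fun ξ => |f ξ| * u ξ) μ) (hu_int : Integrable u μ) :
    (∫ ξ, u ξ * max (f ξ - t) 0 ∂μ) - (∫ ξ, l ξ * max (t - f ξ) 0 ∂μ)
        - (∫ ξ, (if f ξ < t then l ξ else u ξ) ∂μ) * (t' - t)
      ≤ (∫ ξ, u ξ * max (f ξ - t') 0 ∂μ) - ∫ ξ, l ξ * max (t' - f ξ) 0 ∂μ := by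
  have hl_abs : ∀ ξ, |l ξ| ≤ u ξ := fun ξ => (abs_of_nonneg (hl0 ξ)).trans_le (hlu ξ)
  have hu_abs : ∀ ξ, |u ξ| ≤ u ξ := fun ξ => (abs_of_nonneg ((hl0 ξ).trans (hlu ξ))).le
  have hu_hinge (s : ℝ) :=
    integrable_mul_max_sub_const s hf hu_int hfu hu.aestronglyMeasurable hu_abs
  have hl_hinge (s : ℝ) :=
    integrable_mul_max_const_sub s hf hu_int hfu hl.aestronglyMeasurable hl_abs
  have hσ : Integrable (fun ξ => if f ξ < t then l ξ else u ξ) μ :=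
    hu_int.mono'
      (Measurable.ite (measurableSet_lt hf measurable_const) hl hu).aestronglyMeasurable
      (ae_of_all _ fun ξ => by split_ifs; exacts [hl_abs ξ, hu_abs ξ])
  have hφ (s : ℝ) : Integrable (fun ξ => u ξ * max (f ξ - s) 0 - l ξ * max (s - f ξ) 0) μ :=
    (hu_hinge s).sub (hl_hinge s)
  rw [← integral_sub (hu_hinge t) (hl_hinge t), ← integral_sub (hu_hinge t') (hl_hinge t'),
    ← integral_mul_const, ← integral_sub (hφ t) (hσ.mul_const _)]
  exact integral_mono ((hφ t).sub (hσ.mul_const _)) (hφ t')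
    fun ξ => weighted_hinge_subgradient (hlu ξ) (f ξ) t t'

end

/-- The quantity `1 − ∫ l·1{f<λ} − ∫ u·1{f≥λ}` is a subgradient at `λ`
of the dual objective `G(λ) = λ − ∫ l (f − λ)₋ + ∫ u (f − λ)₊`. -/
theorem dual_objective_subgradient
    {m : ℕ} (μ : Measure (EuclideanSpace ℝ (Fin m)))
    (f l u : EuclideanSpace ℝ (Fin m) → ℝ) (lam : ℝ)
    (hf : Measurable f) (hl : Measurable l) (hu : Measurable u)
    (hl0 : ∀ ξ, 0 ≤ l ξ) (hlu : ∀ ξ, l ξ ≤ u ξ)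
    (hfu : Integrable (fun ξ => |f ξ| * u ξ) μ)
    (hu_int : Integrable u μ)
    (G : ℝ → ℝ)
    (hG : G = fun t : ℝ =>
      t - ∫ ξ, l ξ * max (t - f ξ) 0 ∂μ + ∫ ξ, u ξ * max (f ξ - t) 0 ∂μ) :
    ∀ lam' : ℝ,
      G lam + (1 - (∫ ξ in {ξ | f ξ < lam}, l ξ ∂μ) -
          ∫ ξ in {ξ | lam ≤ f ξ}, u ξ ∂μ) * (lam' - lam) ≤ G lam' := by
  intro lam'
  have hl_int : Integrable l μ :=
    hu_int.mono' hl.aestronglyMeasurable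
      (ae_of_all _ fun ξ => (abs_of_nonneg (hl0 ξ)).trans_le (hlu ξ))
  have key := integral_weighted_hinge_subgradient lam lam' hf hl hu hl0 hlu hfu hu_int
  rw [integral_ite_lt_const lam hf hl_int hu_int] at key
  subst hG
  linarith
end

section
/- Let the dual objective be F(x,λ) = λ − ∫ l(ξ)(f(x,ξ) − λ)_− dξ + ∫ u(ξ)(f(x,ξ) − λ)_+ dξ and v(x) = sup_{p: l≤p≤u, ∫p=1} ∫ f(x,ξ)p(ξ)dξ. Then for every x ∈ X and every λ ∈ ℝ, v(x) ≤ F(x,λ). -/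
/-!
For every admissible density `p` and every `λ`, the pointwise bound
`(f - λ) p ≤ u (f - λ)₊ - l (f - λ)₋`, which holds because `l ≤ p ≤ u`, integrates
(using `∫ p = 1`) to `∫ f p ≤ F(x, λ)`; taking the supremum over `p` gives the claim.
-/

open MeasureTheory

lemma sub_mul_add_mul_max_le {R : Type*} [CommRing R] [LinearOrder R] [IsStrictOrderedRing R]
    {y lam l p u : R} (hlp : l ≤ p) (hpu : p ≤ u) :
    (y - lam) * p + l * max (lam - y) 0 ≤ u * max (y - lam) 0 := by
  rcases le_total 0 (y - lam) with h | h
  · rw [max_eq_left h, max_eq_right (by linarith)]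
    nlinarith [mul_le_mul_of_nonneg_left hpu h]
  · rw [max_eq_right h, max_eq_left (by linarith)]
    nlinarith [mul_le_mul_of_nonpos_left hlp h]

section

variable {α : Type*} [MeasurableSpace α] {μ : Measure α}

/-- `g` need not be integrable, nor even measurable: otherwise `∫ g = 0` and `f ≤ f + g ≤ h`. -/
lemma integral_add_le_of_add_le {f g h : α → ℝ} (hf : Integrable f μ) (hh : Integrable h μ)
    (hg : ∀ a, 0 ≤ g a) (hfgh : ∀ a, f a + g a ≤ h a) :
    ∫ a, f a ∂μ + ∫ a, g a ∂μ ≤ ∫ a, h a ∂μ := by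
  by_cases hgi : Integrable g μ
  · rw [← integral_add hf hgi]
    exact integral_mono (hf.add hgi) hh hfgh
  · rw [integral_undef hgi, add_zero]
    exact integral_mono hf hh fun a => (le_add_of_nonneg_right (hg a)).trans (hfgh a)

lemma integrable_mul_max_sub {g u : α → ℝ} (lam : ℝ) (hg : AEStronglyMeasurable g μ)
    (hu0 : ∀ a, 0 ≤ u a) (hgu : Integrable (fun a => |g a| * u a) μ) (hu : Integrable u μ) :
    Integrable (fun a => u a * max (g a - lam) 0) μ := by
  refine (hgu.add (hu.const_mul |lam|)).mono'
    (hu.aestronglyMeasurable.mul ((hg.sub aestronglyMeasurable_const).sup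
      aestronglyMeasurable_const)) (.of_forall fun a => ?_)
  have hmax : max (g a - lam) 0 ≤ |g a| + |lam| :=
    max_le (by linarith [le_abs_self (g a), neg_abs_le lam]) (by positivity)
  rw [Real.norm_eq_abs, abs_mul, abs_of_nonneg (hu0 a), abs_of_nonneg (le_max_right _ _)]
  simp only [Pi.add_apply]
  nlinarith [mul_le_mul_of_nonneg_left hmax (hu0 a)]

theorem integral_mul_le_dual {g l p u : α → ℝ} (lam : ℝ) (hg : AEStronglyMeasurable g μ)
    (hgu : Integrable (fun a => |g a| * u a) μ) (hu : Integrable u μ) (hl0 : ∀ a, 0 ≤ l a)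
    (hlp : ∀ a, l a ≤ p a) (hpu : ∀ a, p a ≤ u a) (hp1 : ∫ a, p a ∂μ = 1) :
    ∫ a, g a * p a ∂μ ≤
      lam - ∫ a, l a * max (lam - g a) 0 ∂μ + ∫ a, u a * max (g a - lam) 0 ∂μ := by
  -- non-integrable functions have integral `0`, so `∫ p = 1` already forces integrability
  have hp : Integrable p μ := .of_integral_ne_zero (by simp [hp1])
  have hp0 : ∀ a, 0 ≤ p a := fun a => (hl0 a).trans (hlp a)
  have hgp : Integrable (fun a => g a * p a) μ := by
    refine hgu.mono' (hg.mul hp.aestronglyMeasurable) (.of_forall fun a => ?_)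
    rw [Real.norm_eq_abs, abs_mul, abs_of_nonneg (hp0 a)]
    exact mul_le_mul_of_nonneg_left (hpu a) (abs_nonneg _)
  have hgu_max : Integrable (fun a => u a * max (g a - lam) 0) μ :=
    integrable_mul_max_sub lam hg (fun a => (hp0 a).trans (hpu a)) hgu hu
  have hshift_int : Integrable (fun a => (g a - lam) * p a) μ := by
    simpa only [sub_mul, Pi.sub_def] using hgp.sub (hp.const_mul lam)
  have hshift : ∫ a, (g a - lam) * p a ∂μ = ∫ a, g a * p a ∂μ - lam := by
    simp only [sub_mul]
    rw [integral_sub hgp (hp.const_mul lam), integral_const_mul, hp1, mul_one]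
  have key := integral_add_le_of_add_le hshift_int hgu_max
    (fun a => mul_nonneg (hl0 a) (le_max_right _ _))
    (fun a => sub_mul_add_mul_max_le (hlp a) (hpu a))
  linarith

end

theorem primal_le_dual_general
    {n m : ℕ} (X : Set (EuclideanSpace ℝ (Fin n)))
    (μ : Measure (EuclideanSpace ℝ (Fin m)))
    (f : EuclideanSpace ℝ (Fin n) → EuclideanSpace ℝ (Fin m) → ℝ)
    (l u : EuclideanSpace ℝ (Fin m) → ℝ)
    (hl0 : ∀ ξ, 0 ≤ l ξ)
    (hfmeas : ∀ x ∈ X, Measurable (f x))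
    (hfu : ∀ x ∈ X, Integrable (fun ξ => |f x ξ| * u ξ) μ)
    (hu_int : Integrable u μ)
    (D : Set (EuclideanSpace ℝ (Fin m) → ℝ))
    (hD : D = {p | Measurable p ∧ (∀ ξ, l ξ ≤ p ξ ∧ p ξ ≤ u ξ) ∧ ∫ ξ, p ξ ∂μ = 1})
    (hDne : D.Nonempty) :
    ∀ x ∈ X, ∀ lam : ℝ,
      sSup ((fun p => ∫ ξ, f x ξ * p ξ ∂μ) '' D) ≤
        lam - ∫ ξ, l ξ * max (lam - f x ξ) 0 ∂μ +
          ∫ ξ, u ξ * max (f x ξ - lam) 0 ∂μ := by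
  intro x hx lam
  refine csSup_le (hDne.image _) ?_
  rintro _ ⟨p, hp, rfl⟩
  rw [hD] at hp
  obtain ⟨-, hlpu, hp1⟩ := hp
  exact integral_mul_le_dual lam (hfmeas x hx).aestronglyMeasurable (hfu x hx) hu_int hl0
    (fun ξ => (hlpu ξ).1) (fun ξ => (hlpu ξ).2) hp1

/-- For every `x ∈ X` and every `λ ∈ ℝ`, the primal worst-case value
`v(x) = sup_{p : l ≤ p ≤ u, ∫p = 1} ∫ f(x,·) p` is at most the dual objective
`F(x,λ) = λ − ∫ l (f(x,·) − λ)₋ + ∫ u (f(x,·) − λ)₊`. -/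
theorem primal_le_dual
    {n m : ℕ} (X : Set (EuclideanSpace ℝ (Fin n)))
    (μ : Measure (EuclideanSpace ℝ (Fin m)))
    (f : EuclideanSpace ℝ (Fin n) → EuclideanSpace ℝ (Fin m) → ℝ)
    (l u : EuclideanSpace ℝ (Fin m) → ℝ)
    (hl : Measurable l) (hu : Measurable u)
    (hl0 : ∀ ξ, 0 ≤ l ξ) (hlu : ∀ ξ, l ξ ≤ u ξ)
    (hfmeas : ∀ x ∈ X, Measurable (f x))
    (hfu : ∀ x ∈ X, Integrable (fun ξ => |f x ξ| * u ξ) μ)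
    (hu_int : Integrable u μ)
    (D : Set (EuclideanSpace ℝ (Fin m) → ℝ))
    (hD : D = {p | Measurable p ∧ (∀ ξ, l ξ ≤ p ξ ∧ p ξ ≤ u ξ) ∧ ∫ ξ, p ξ ∂μ = 1})
    (hDne : D.Nonempty) :
    ∀ x ∈ X, ∀ lam : ℝ,
      sSup ((fun p => ∫ ξ, f x ξ * p ξ ∂μ) '' D) ≤
        lam - ∫ ξ, l ξ * max (lam - f x ξ) 0 ∂μ +
          ∫ ξ, u ξ * max (f x ξ - lam) 0 ∂μ :=
  primal_le_dual_general X μ f l u hl0 hfmeas hfu hu_int D hD hDne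
end

section
/- Suppose p* : ℝ → [0,∞) is a density that is (C,ρ)-Hölder continuous, i.e., |p*(ξ') − p*(ξ)| ≤ C|ξ' − ξ|^ρ for all ξ, ξ', monotonically decreasing on an interval containing points x_{i−1} < x_i < ξ < x_{i+1} with p*(x_{i+1}) ≥ δ/2 > 0. Let Δ_i = F*(x_i) − F*(x_{i−1}) and Δ_{i+1} = F*(x_{i+1}) − F*(x_i) with F* the CDF of p*, and let c⁺, c⁻ > 0 be given. Then c⁺/(x_i − x_{i−1}) − c⁻/(x_{i+1} − x_i) ≤ U·|c⁺/Δ_i − c⁻/Δ_{i+1}| + (C c⁺/Δ_i)·((Δ_i + Δ_{i+1})/(δ/2))^ρ, where U is an upper bound for p*. -/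
open MeasureTheory

/-- The key bound in the shape-restricted band analysis:
`c⁺/(x₁−x₀) − c⁻/(x₂−x₁) ≤ U·|c⁺/Δᵢ − c⁻/Δᵢ₊₁| + (C c⁺/Δᵢ)·((Δᵢ+Δᵢ₊₁)/(δ/2))^ρ`. -/
theorem band_gap_bound
    (pstar : ℝ → ℝ) (U C ρ δ : ℝ) (x0 x1 x2 : ℝ)
    (F : ℝ → ℝ) (Δi Δi1 cplus cminus : ℝ)
    (hp0 : ∀ ξ, 0 ≤ pstar ξ) (hpU : ∀ ξ, pstar ξ ≤ U)
    (hC : 0 < C) (hρ : 0 < ρ)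
    (hHolder : ∀ ξ ξ' : ℝ, |pstar ξ' - pstar ξ| ≤ C * |ξ' - ξ| ^ ρ)
    (hanti : AntitoneOn pstar (Set.Icc x0 x2))
    (hδ : 0 < δ) (hlow : δ / 2 ≤ pstar x2)
    (hx01 : x0 < x1) (hx12 : x1 < x2)
    (hF : ∀ t, F t = ∫ ξ in Set.Iic t, pstar ξ)
    (hintloc : IntegrableOn pstar (Set.Iic x2))
    (hΔi : Δi = F x1 - F x0) (hΔi1 : Δi1 = F x2 - F x1)
    (hΔipos : 0 < Δi) (hΔi1pos : 0 < Δi1)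
    (hcm : 0 < cminus) (hcpm : cminus ≤ cplus) :
    cplus / (x1 - x0) - cminus / (x2 - x1) ≤
      U * |cplus / Δi - cminus / Δi1| +
        (C * cplus / Δi) * ((Δi + Δi1) / (δ / 2)) ^ ρ := by
  have hx02 : x0 < x2 := hx01.trans hx12
  -- bounds on integrals over Ioc a b
  have key : ∀ a b : ℝ, x0 ≤ a → a < b → b ≤ x2 →
      pstar b * (b - a) ≤ (∫ ξ in Set.Ioc a b, pstar ξ) ∧
      (∫ ξ in Set.Ioc a b, pstar ξ) ≤ pstar a * (b - a) := by
    intro a b ha hab hb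
    have hsub : Set.Ioc a b ⊆ Set.Iic x2 := fun ξ hξ => hξ.2.trans hb
    have hInt : IntegrableOn pstar (Set.Ioc a b) := hintloc.mono_set hsub
    have hvol : (volume (Set.Ioc a b)).toReal = b - a := by
      rw [Real.volume_Ioc, ENNReal.toReal_ofReal (by linarith)]
    have haI : a ∈ Set.Icc x0 x2 := ⟨ha, hab.le.trans hb⟩
    have hbI : b ∈ Set.Icc x0 x2 := ⟨ha.trans hab.le, hb⟩
    constructor
    · have h1 : (∫ _ξ in Set.Ioc a b, pstar b) ≤ ∫ ξ in Set.Ioc a b, pstar ξ := by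
        refine setIntegral_mono_on (integrableOn_const measure_Ioc_lt_top.ne) hInt
          measurableSet_Ioc ?_
        intro ξ hξ
        exact hanti ⟨ha.trans hξ.1.le, hξ.2.trans hb⟩ hbI hξ.2
      rwa [setIntegral_const, measureReal_def, hvol, smul_eq_mul, mul_comm] at h1
    · have h1 : (∫ ξ in Set.Ioc a b, pstar ξ) ≤ ∫ _ξ in Set.Ioc a b, pstar a := by
        refine setIntegral_mono_on hInt (integrableOn_const measure_Ioc_lt_top.ne)
          measurableSet_Ioc ?_
        intro ξ hξ
        exact hanti haI ⟨ha.trans hξ.1.le, hξ.2.trans hb⟩ hξ.1.le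
      rwa [setIntegral_const, measureReal_def, hvol, smul_eq_mul, mul_comm] at h1
  -- identify Δi, Δi1 with integrals
  have hFdiff : ∀ a b : ℝ, a ≤ b → b ≤ x2 → F b - F a = ∫ ξ in Set.Ioc a b, pstar ξ := by
    intro a b hab hb
    rw [hF, hF, intervalIntegral.integral_Iic_sub_Iic
        (hintloc.mono_set (Set.Iic_subset_Iic.2 (hab.trans hb)))
        (hintloc.mono_set (Set.Iic_subset_Iic.2 hb)),
      intervalIntegral.integral_of_le hab]
  have hΔieq : Δi = ∫ ξ in Set.Ioc x0 x1, pstar ξ := by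
    rw [hΔi, hFdiff x0 x1 hx01.le hx12.le]
  have hΔi1eq : Δi1 = ∫ ξ in Set.Ioc x1 x2, pstar ξ := by
    rw [hΔi1, hFdiff x1 x2 hx12.le le_rfl]
  have hΔsum : Δi + Δi1 = ∫ ξ in Set.Ioc x0 x2, pstar ξ := by
    rw [hΔi, hΔi1]
    have : F x1 - F x0 + (F x2 - F x1) = F x2 - F x0 := by ring
    rw [this, hFdiff x0 x2 hx02.le le_rfl]
  have k1 := key x0 x1 le_rfl hx01 hx12.le
  have k2 := key x1 x2 hx01.le hx12 le_rfl
  have k3 := key x0 x2 le_rfl hx02 le_rfl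
  rw [← hΔieq] at k1
  rw [← hΔi1eq] at k2
  rw [← hΔsum] at k3
  have h1pos : 0 < x1 - x0 := by linarith
  have h2pos : 0 < x2 - x1 := by linarith
  have hδ2 : (0:ℝ) < δ / 2 := by linarith
  -- averages
  set a : ℝ := Δi / (x1 - x0) with ha_def
  set b : ℝ := Δi1 / (x2 - x1) with hb_def
  have ha_le : a ≤ pstar x0 := by
    rw [ha_def, div_le_iff₀ h1pos]; exact k1.2
  have hb_ge : pstar x2 ≤ b := by
    rw [hb_def, le_div_iff₀ h2pos]; exact k2.1
  have hb_le : b ≤ pstar x1 := by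
    rw [hb_def, div_le_iff₀ h2pos]; exact k2.2
  have hb_nonneg : 0 ≤ b := (hp0 x2).trans hb_ge
  have hbU : b ≤ U := hb_le.trans (hpU x1)
  -- length bound
  have hlen : x2 - x0 ≤ (Δi + Δi1) / (δ / 2) := by
    rw [le_div_iff₀ hδ2]
    nlinarith [k3.1, hlow, hp0 x2]
  -- Hölder bound
  have hH : pstar x0 - pstar x2 ≤ C * ((Δi + Δi1) / (δ / 2)) ^ ρ := by
    have h1 := hHolder x2 x0
    have habs : |x0 - x2| = x2 - x0 := by rw [abs_sub_comm, abs_of_pos (by linarith)]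
    rw [habs] at h1
    have h2 : pstar x0 - pstar x2 ≤ C * (x2 - x0) ^ ρ :=
      le_trans (le_abs_self _) h1
    have h3 : (x2 - x0) ^ ρ ≤ ((Δi + Δi1) / (δ / 2)) ^ ρ :=
      Real.rpow_le_rpow (by linarith) hlen hρ.le
    nlinarith
  have hcp : 0 < cplus := hcm.trans_le hcpm
  have hcΔ : 0 ≤ cplus / Δi := le_of_lt (div_pos hcp hΔipos)
  set D : ℝ := cplus / Δi - cminus / Δi1 with hD_def
  have hrpow_nonneg : 0 ≤ ((Δi + Δi1) / (δ / 2)) ^ ρ := Real.rpow_nonneg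
    (by positivity) ρ
  -- decomposition
  have hdecomp : cplus / (x1 - x0) - cminus / (x2 - x1)
      = D * b + (cplus / Δi) * (a - b) := by
    rw [hD_def, ha_def, hb_def]
    field_simp
    ring
  have hDb : D * b ≤ |D| * U :=
    mul_le_mul (le_abs_self D) hbU hb_nonneg (abs_nonneg D)
  have hab2 : (cplus / Δi) * (a - b) ≤ (cplus / Δi) * (C * ((Δi + Δi1) / (δ / 2)) ^ ρ) := by
    apply mul_le_mul_of_nonneg_left _ hcΔ
    linarith
  calc cplus / (x1 - x0) - cminus / (x2 - x1)
      = D * b + (cplus / Δi) * (a - b) := hdecomp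
    _ ≤ |D| * U + (cplus / Δi) * (C * ((Δi + Δi1) / (δ / 2)) ^ ρ) := add_le_add hDb hab2
    _ = U * |D| + (C * cplus / Δi) * ((Δi + Δi1) / (δ / 2)) ^ ρ := by ring
end

section
/- Suppose sup_{ξ∈Ξ} |p̂(ξ) − p*(ξ)| ≤ δ, let l = max{0, p̂ − δ} and u = p̂ + δ, and D = {p : l ≤ p ≤ u, ∫_Ξ p = 1}. If Ξ has finite Lebesgue measure M(Ξ) and sup_{x∈X, ξ∈Ξ} |f(x,ξ)| = B < ∞, then for all x ∈ X: | ∫_Ξ f(x,ξ) p*(ξ) dξ − sup_{p∈D} ∫_Ξ f(x,ξ) p(ξ) dξ | ≤ 2δ·B·M(Ξ). -/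
/-!
Both `p*` and any `p ∈ D` lie in the band `[p̂ - δ, p̂ + δ]` on `Ξ`, so they differ by at most
`2δ` there, and the expected values of `f(x,·)` under them differ by at most `2δ·B·M(Ξ)`.
Since `p* ∈ D`, the supremum lies between `∫ f(x,·) p*` and `∫ f(x,·) p* + 2δ·B·M(Ξ)`.
-/

open MeasureTheory

theorem abs_sub_le_two_mul_of_mem_band {a b c δ : ℝ} (hc : |a - c| ≤ δ) (hlo : a - δ ≤ b)
    (hhi : b ≤ a + δ) : |b - c| ≤ 2 * δ := by
  rw [abs_le] at hc ⊢
  constructor <;> linarith [hc.1, hc.2]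

theorem abs_sub_csSup_le_of_forall_abs_sub_le {S : Set ℝ} {a C : ℝ} (ha : a ∈ S)
    (h : ∀ y ∈ S, |y - a| ≤ C) : |a - sSup S| ≤ C := by
  have hsup_le : sSup S ≤ a + C :=
    csSup_le ⟨a, ha⟩ fun y hy => by linarith [(abs_le.mp (h y hy)).2]
  have hle_sup : a ≤ sSup S := le_csSup ⟨a + C, fun y hy => by linarith [(abs_le.mp (h y hy)).2]⟩ ha
  rw [abs_sub_comm, abs_of_nonneg (sub_nonneg.mpr hle_sup)]
  linarith

theorem abs_setIntegral_mul_sub_le {α : Type*} [MeasurableSpace α] {μ : Measure α} {s : Set α}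
    (hs : μ s < ⊤) {g p q : α → ℝ} {B ε : ℝ} (hg : ∀ x ∈ s, |g x| ≤ B)
    (hpq : ∀ x ∈ s, |p x - q x| ≤ ε) (hp : IntegrableOn (fun x => g x * p x) s μ)
    (hq : IntegrableOn (fun x => g x * q x) s μ) :
    |∫ x in s, g x * p x ∂μ - ∫ x in s, g x * q x ∂μ| ≤ B * ε * μ.real s := by
  rw [← integral_sub hp hq, ← Real.norm_eq_abs]
  refine norm_setIntegral_le_of_norm_le_const hs fun x hx => ?_
  rw [← mul_sub, Real.norm_eq_abs, abs_mul]
  exact mul_le_mul (hg x hx) (hpq x hx) (abs_nonneg _) ((abs_nonneg _).trans (hg x hx))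

theorem kde_band_value_error_general
    {n m : ℕ} (X : Set (EuclideanSpace ℝ (Fin n)))
    (Ξ : Set (EuclideanSpace ℝ (Fin m)))
    (hΞfin : volume Ξ < ⊤)
    (f : EuclideanSpace ℝ (Fin n) → EuclideanSpace ℝ (Fin m) → ℝ)
    (pstar phat : EuclideanSpace ℝ (Fin m) → ℝ) (δ B : ℝ)
    (hfB : ∀ x ∈ X, ∀ ξ ∈ Ξ, |f x ξ| ≤ B)
    (hp0 : ∀ ξ, 0 ≤ pstar ξ) (hpstar_dens : ∫ ξ in Ξ, pstar ξ = 1)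
    (herr : ∀ ξ ∈ Ξ, |phat ξ - pstar ξ| ≤ δ)
    (D : Set (EuclideanSpace ℝ (Fin m) → ℝ))
    (hD : D = {p | (∀ ξ ∈ Ξ, max 0 (phat ξ - δ) ≤ p ξ ∧ p ξ ≤ phat ξ + δ) ∧
      ∫ ξ in Ξ, p ξ = 1})
    (hint : ∀ x ∈ X, ∀ p ∈ D, IntegrableOn (fun ξ => f x ξ * p ξ) Ξ)
    (hintstar : ∀ x ∈ X, IntegrableOn (fun ξ => f x ξ * pstar ξ) Ξ) :
    ∀ x ∈ X,
      |(∫ ξ in Ξ, f x ξ * pstar ξ) -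
          sSup ((fun p => ∫ ξ in Ξ, f x ξ * p ξ) '' D)| ≤
        2 * δ * B * (volume Ξ).toReal := by
  intro x hx
  have hpstar : pstar ∈ D := by
    rw [hD]
    refine ⟨fun ξ hξ => ⟨max_le (hp0 ξ) ?_, ?_⟩, hpstar_dens⟩ <;>
      linarith [abs_le.mp (herr ξ hξ)]
  have hband : ∀ p ∈ D, ∀ ξ ∈ Ξ, |p ξ - pstar ξ| ≤ 2 * δ := by
    intro p hp ξ hξ
    rw [hD] at hp
    exact abs_sub_le_two_mul_of_mem_band (herr ξ hξ)
      ((le_max_right _ _).trans (hp.1 ξ hξ).1) (hp.1 ξ hξ).2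
  refine abs_sub_csSup_le_of_forall_abs_sub_le (Set.mem_image_of_mem _ hpstar) ?_
  rintro _ ⟨p, hp, rfl⟩
  calc _ ≤ B * (2 * δ) * volume.real Ξ :=
        abs_setIntegral_mul_sub_le hΞfin (hfB x hx) (hband p hp) (hint x hx p hp) (hintstar x hx)
    _ = 2 * δ * B * (volume Ξ).toReal := by rw [measureReal_def]; ring

/-- If `sup_Ξ |p̂ − p*| ≤ δ` and `D` is the band ambiguity set built
from `l = max{0, p̂ − δ}`, `u = p̂ + δ`, then for every `x`,
`|∫ f(x,·) p* − sup_{p∈D} ∫ f(x,·) p| ≤ 2δ·B·M(Ξ)`. -/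
theorem kde_band_value_error
    {n m : ℕ} (X : Set (EuclideanSpace ℝ (Fin n)))
    (Ξ : Set (EuclideanSpace ℝ (Fin m))) (hΞ : MeasurableSet Ξ)
    (hΞfin : volume Ξ < ⊤)
    (f : EuclideanSpace ℝ (Fin n) → EuclideanSpace ℝ (Fin m) → ℝ)
    (pstar phat : EuclideanSpace ℝ (Fin m) → ℝ) (δ B : ℝ)
    (hδ : 0 < δ) (hB : 0 ≤ B)
    (hfB : ∀ x ∈ X, ∀ ξ ∈ Ξ, |f x ξ| ≤ B)
    (hp0 : ∀ ξ, 0 ≤ pstar ξ) (hpstar_dens : ∫ ξ in Ξ, pstar ξ = 1)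
    (herr : ∀ ξ ∈ Ξ, |phat ξ - pstar ξ| ≤ δ)
    (D : Set (EuclideanSpace ℝ (Fin m) → ℝ))
    (hD : D = {p | (∀ ξ ∈ Ξ, max 0 (phat ξ - δ) ≤ p ξ ∧ p ξ ≤ phat ξ + δ) ∧
      ∫ ξ in Ξ, p ξ = 1})
    (hint : ∀ x ∈ X, ∀ p ∈ D, IntegrableOn (fun ξ => f x ξ * p ξ) Ξ)
    (hintstar : ∀ x ∈ X, IntegrableOn (fun ξ => f x ξ * pstar ξ) Ξ) :
    ∀ x ∈ X,
      |(∫ ξ in Ξ, f x ξ * pstar ξ) -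
          sSup ((fun p => ∫ ξ in Ξ, f x ξ * p ξ) '' D)| ≤
        2 * δ * B * (volume Ξ).toReal :=
  kde_band_value_error_general X Ξ hΞfin f pstar phat δ B hfB hp0 hpstar_dens herr D hD hint
    hintstar
end

section
/- Under the event that the true density p* belongs to the band ambiguity set D = {p : l ≤ p ≤ u, ∫ p = 1} with u − l ≤ 2δ pointwise on a set Ξ of finite Lebesgue measure, the distance between the DRO optimal value v_D = inf_{x∈X} sup_{p∈D} ∫ f(x,ξ)p(ξ)dξ and the true optimal value v* = inf_{x∈X} ∫ f(x,ξ)p*(ξ)dξ satisfies |v_D − v*| ≤ 2δ·B·M(Ξ), where B = sup_{x,ξ}|f(x,ξ)|. -/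
open MeasureTheory

/-- If the true density `p*` lies in the band ambiguity set `D` with
band width `u − l ≤ 2δ` on a set `Ξ` of finite Lebesgue measure, then the DRO
optimal value and the true optimal value differ by at most `2δ·B·M(Ξ)`. -/
theorem dro_value_gap
    {n m : ℕ} (X : Set (EuclideanSpace ℝ (Fin n))) (hXne : X.Nonempty)
    (Ξ : Set (EuclideanSpace ℝ (Fin m))) (hΞ : MeasurableSet Ξ)
    (hΞfin : volume Ξ < ⊤)
    (f : EuclideanSpace ℝ (Fin n) → EuclideanSpace ℝ (Fin m) → ℝ)
    (pstar l u : EuclideanSpace ℝ (Fin m) → ℝ) (δ B : ℝ)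
    (hδ : 0 < δ) (hB : 0 ≤ B)
    (hfB : ∀ x ∈ X, ∀ ξ ∈ Ξ, |f x ξ| ≤ B)
    (hband : ∀ ξ ∈ Ξ, l ξ ≤ pstar ξ ∧ pstar ξ ≤ u ξ)
    (hwidth : ∀ ξ ∈ Ξ, u ξ - l ξ ≤ 2 * δ)
    (hl0 : ∀ ξ, 0 ≤ l ξ)
    (hpstar_dens : ∫ ξ in Ξ, pstar ξ = 1)
    (D : Set (EuclideanSpace ℝ (Fin m) → ℝ))
    (hD : D = {p | (∀ ξ ∈ Ξ, l ξ ≤ p ξ ∧ p ξ ≤ u ξ) ∧ ∫ ξ in Ξ, p ξ = 1})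
    (hint : ∀ x ∈ X, ∀ p ∈ D, IntegrableOn (fun ξ => f x ξ * p ξ) Ξ)
    (vD vstar : ℝ)
    (hvD : vD = ⨅ x : X, sSup ((fun p => ∫ ξ in Ξ, f (x : EuclideanSpace ℝ (Fin n)) ξ * p ξ) '' D))
    (hvstar : vstar = ⨅ x : X, ∫ ξ in Ξ, f (x : EuclideanSpace ℝ (Fin n)) ξ * pstar ξ)
    (hbddD : BddBelow (Set.range fun x : X =>
      sSup ((fun p => ∫ ξ in Ξ, f (x : EuclideanSpace ℝ (Fin n)) ξ * p ξ) '' D)))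
    (hbddstar : BddBelow (Set.range fun x : X =>
      ∫ ξ in Ξ, f (x : EuclideanSpace ℝ (Fin n)) ξ * pstar ξ)) :
    |vD - vstar| ≤ 2 * δ * B * (volume Ξ).toReal := by
  set C : ℝ := 2 * δ * B * (volume Ξ).toReal with hC
  have hpstarD : pstar ∈ D := by
    rw [hD]; exact ⟨hband, hpstar_dens⟩
  -- key estimate: for x ∈ X and p ∈ D, ∫ f p ≤ ∫ f pstar + C
  have key : ∀ x ∈ X, ∀ p ∈ D,
      (∫ ξ in Ξ, f x ξ * p ξ) ≤ (∫ ξ in Ξ, f x ξ * pstar ξ) + C := by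
    intro x hx p hp
    have hip := hint x hx p hp
    have his := hint x hx pstar hpstarD
    have hsub : (∫ ξ in Ξ, f x ξ * p ξ) - (∫ ξ in Ξ, f x ξ * pstar ξ)
        = ∫ ξ in Ξ, (f x ξ * p ξ - f x ξ * pstar ξ) := (integral_sub hip his).symm
    have hbound : ‖∫ ξ in Ξ, (f x ξ * p ξ - f x ξ * pstar ξ)‖
        ≤ (2 * δ * B) * (volume Ξ).toReal := by
      apply norm_setIntegral_le_of_norm_le_const_ae' hΞfin
      filter_upwards with ξ hξ
      have hpb := (hD ▸ hp).1 ξ hξ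
      have hsb := hband ξ hξ
      have hw := hwidth ξ hξ
      have hfb := hfB x hx ξ hξ
      have h1 : |p ξ - pstar ξ| ≤ 2 * δ := by
        rw [abs_le]; constructor <;> [skip; skip] <;> nlinarith [hpb.1, hpb.2, hsb.1, hsb.2]
      have : ‖f x ξ * p ξ - f x ξ * pstar ξ‖ = |f x ξ| * |p ξ - pstar ξ| := by
        rw [← mul_sub, Real.norm_eq_abs, abs_mul]
      rw [this]
      calc |f x ξ| * |p ξ - pstar ξ| ≤ B * (2 * δ) :=
            mul_le_mul hfb h1 (abs_nonneg _) hB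
        _ = 2 * δ * B := by ring
    rw [Real.norm_eq_abs, ← hsub, abs_le] at hbound
    linarith [hbound.2]
  -- the image set for each x ∈ X is nonempty and bounded above
  have hne : ∀ x : EuclideanSpace ℝ (Fin n),
      ((fun p => ∫ ξ in Ξ, f x ξ * p ξ) '' D).Nonempty :=
    fun x => ⟨_, ⟨pstar, hpstarD, rfl⟩⟩
  have hlowD : ∀ x ∈ X,
      (∫ ξ in Ξ, f x ξ * pstar ξ) ≤ sSup ((fun p => ∫ ξ in Ξ, f x ξ * p ξ) '' D) := by
    intro x hx
    apply le_csSup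
    · exact ⟨(∫ ξ in Ξ, f x ξ * pstar ξ) + C, by
        rintro y ⟨p, hp, rfl⟩; exact key x hx p hp⟩
    · exact ⟨pstar, hpstarD, rfl⟩
  have hupD : ∀ x ∈ X,
      sSup ((fun p => ∫ ξ in Ξ, f x ξ * p ξ) '' D) ≤ (∫ ξ in Ξ, f x ξ * pstar ξ) + C := by
    intro x hx
    apply csSup_le (hne x)
    rintro y ⟨p, hp, rfl⟩; exact key x hx p hp
  haveI : Nonempty X := hXne.to_subtype
  -- vstar ≤ vD
  have h1 : vstar ≤ vD := by
    rw [hvstar, hvD]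
    exact ciInf_mono hbddstar (fun x => hlowD x x.2)
  -- vD ≤ vstar + C
  have h2 : vD ≤ vstar + C := by
    have : ∀ x : X, vD - C ≤ ∫ ξ in Ξ, f (x : EuclideanSpace ℝ (Fin n)) ξ * pstar ξ := by
      intro x
      have hvd_le : vD ≤ sSup ((fun p => ∫ ξ in Ξ,
          f (x : EuclideanSpace ℝ (Fin n)) ξ * p ξ) '' D) := by
        rw [hvD]; exact ciInf_le hbddD x
      have := hupD x x.2
      linarith
    have := le_ciInf this
    rw [← hvstar] at this
    linarith
  rw [abs_le]
  constructor <;> [linarith; linarith]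
end
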